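/- arXiv:2110.02457 — 3 statements merged into one kernel-verified Lean document; each statement's English description precedes it below -/
import Mathlib

section
/- Let A ∈ ℝ^{n×n} and η > 0, and consider the alternating GDA iteration matrix G^(Alt) = [[I, -ηA], [ηAᵀ, I - η²AᵀA]]. Then M := I - G^(Alt) = [[0, ηA], [-ηAᵀ, η²AᵀA]] is unitarily (orthogonally) similar to a block diagonal matrix whose 2×2 diagonal blocks are [[0, ησᵢ], [-ησᵢ, η²σᵢ²]], where σ₁ ≥ ... ≥ σₙ are the singular values of A. -/
open Matrix

def myE (n : ℕ) : (Fin n ⊕ Fin n) ≃ (Fin 2 × Fin n) where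
  toFun := Sum.elim (fun i => (0, i)) (fun i => (1, i))
  invFun := fun p => if p.1 = 0 then Sum.inl p.2 else Sum.inr p.2
  left_inv := by rintro (i | i) <;> simp
  right_inv := by rintro ⟨b, i⟩; fin_cases b <;> simp

lemma blockDiag_submatrix {n : ℕ} (d : Fin n → Matrix (Fin 2) (Fin 2) ℝ) :
    (Matrix.blockDiagonal d).submatrix (myE n) (myE n) =
      Matrix.fromBlocks (Matrix.diagonal fun i => d i 0 0)
        (Matrix.diagonal fun i => d i 0 1)
        (Matrix.diagonal fun i => d i 1 0)
        (Matrix.diagonal fun i => d i 1 1) := by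
  ext (i | i) (j | j) <;>
    simp [myE, Matrix.blockDiagonal_apply, Matrix.diagonal_apply, eq_comm]

/-- With `A = U Σ Vᵀ` an SVD of `A` (singular values `σ₁ ≥ ... ≥ σₙ ≥ 0`),
`M = I - G^(Alt) = [[0, ηA], [-ηAᵀ, η²AᵀA]]` is orthogonally similar to a block
diagonal matrix whose `2×2` blocks are `[[0, ησᵢ], [-ησᵢ, η²σᵢ²]]`. -/
theorem stmt5 {n : ℕ} (A U V : Matrix (Fin n) (Fin n) ℝ) (σ : Fin n → ℝ) (η : ℝ)
    (hη : 0 < η)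
    (hU : Uᵀ * U = 1) (hV : Vᵀ * V = 1)
    (hσ0 : ∀ i, 0 ≤ σ i) (hσmono : ∀ i j : Fin n, i ≤ j → σ j ≤ σ i)
    (hSVD : A = U * Matrix.diagonal σ * Vᵀ)
    (M : Matrix (Fin n ⊕ Fin n) (Fin n ⊕ Fin n) ℝ)
    (hM : M = Matrix.fromBlocks 0 (η • A) (-(η • Aᵀ)) ((η ^ 2) • (Aᵀ * A))) :
    ∃ (e : (Fin n ⊕ Fin n) ≃ (Fin 2 × Fin n))
      (Q : Matrix (Fin n ⊕ Fin n) (Fin n ⊕ Fin n) ℝ),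
      Qᵀ * Q = 1 ∧ Q * Qᵀ = 1 ∧
      M = Q * ((Matrix.blockDiagonal
          (fun i => !![0, η * σ i; -(η * σ i), η ^ 2 * (σ i) ^ 2])).submatrix e e) * Qᵀ := by
  refine ⟨myE n, Matrix.fromBlocks U 0 0 V, ?_, ?_, ?_⟩
  · simp [Matrix.fromBlocks_transpose, Matrix.fromBlocks_multiply, hU, hV,
      Matrix.fromBlocks_one]
  · have hU' : U * Uᵀ = 1 := mul_eq_one_comm.mp hU
    have hV' : V * Vᵀ = 1 := mul_eq_one_comm.mp hV
    simp [Matrix.fromBlocks_transpose, Matrix.fromBlocks_multiply, hU', hV',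
      Matrix.fromBlocks_one]
  · rw [blockDiag_submatrix]
    have h1 : (fun i =>
        (!![0, η * σ i; -(η * σ i), η ^ 2 * σ i ^ 2] : Matrix (Fin 2) (Fin 2) ℝ) 0 0)
        = fun _ : Fin n => (0 : ℝ) := by funext i; simp
    have h2 : (fun i =>
        (!![0, η * σ i; -(η * σ i), η ^ 2 * σ i ^ 2] : Matrix (Fin 2) (Fin 2) ℝ) 0 1)
        = fun i => η * σ i := by funext i; simp
    have h3 : (fun i =>
        (!![0, η * σ i; -(η * σ i), η ^ 2 * σ i ^ 2] : Matrix (Fin 2) (Fin 2) ℝ) 1 0)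
        = fun i => -(η * σ i) := by funext i; simp
    have h4 : (fun i =>
        (!![0, η * σ i; -(η * σ i), η ^ 2 * σ i ^ 2] : Matrix (Fin 2) (Fin 2) ℝ) 1 1)
        = fun i => η ^ 2 * σ i ^ 2 := by funext i; simp
    rw [h1, h2, h3, h4, Matrix.diagonal_zero]
    have hAt : Aᵀ = V * Matrix.diagonal σ * Uᵀ := by
      rw [hSVD]; simp [Matrix.transpose_mul, Matrix.diagonal_transpose, Matrix.mul_assoc]
    have hAtA : Aᵀ * A = V * Matrix.diagonal (fun i => σ i * σ i) * Vᵀ := by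
      rw [hAt, hSVD]
      rw [show V * Matrix.diagonal σ * Uᵀ * (U * Matrix.diagonal σ * Vᵀ)
          = V * (Matrix.diagonal σ * (Uᵀ * U) * Matrix.diagonal σ) * Vᵀ by
        simp only [Matrix.mul_assoc]]
      rw [hU]
      simp [Matrix.diagonal_mul_diagonal, Matrix.mul_assoc]
    have d2 : (Matrix.diagonal fun i => η * σ i) = η • Matrix.diagonal σ := by
      ext i j; by_cases h : i = j <;> simp [Matrix.diagonal_apply, h]
    have d3 : (Matrix.diagonal fun i => -(η * σ i)) = (-η) • Matrix.diagonal σ := by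
      ext i j; by_cases h : i = j <;> simp [Matrix.diagonal_apply, h]
    have d4 : (Matrix.diagonal fun i => η ^ 2 * σ i ^ 2)
        = (η ^ 2) • Matrix.diagonal (fun i => σ i * σ i) := by
      ext i j; by_cases h : i = j <;> simp [Matrix.diagonal_apply, h, pow_two]
    have e2 : U * (Matrix.diagonal fun i => η * σ i) * Vᵀ = η • A := by
      rw [d2, hSVD]; simp [Matrix.mul_smul, Matrix.smul_mul]
    have e3 : V * (Matrix.diagonal fun i => -(η * σ i)) * Uᵀ = -(η • Aᵀ) := by
      rw [d3, hAt]; simp [Matrix.mul_smul, Matrix.smul_mul]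
    have e4 : V * (Matrix.diagonal fun i => η ^ 2 * σ i ^ 2) * Vᵀ = η ^ 2 • (Aᵀ * A) := by
      rw [d4, hAtA]; simp [Matrix.mul_smul, Matrix.smul_mul]
    rw [hM, Matrix.fromBlocks_transpose, Matrix.fromBlocks_multiply,
      Matrix.fromBlocks_multiply]
    simp only [Matrix.transpose_zero, Matrix.mul_zero, Matrix.zero_mul, add_zero, zero_add,
      ← Matrix.mul_assoc]
    rw [e2, e3, e4]
end

section
/- Let σ ∈ (0,1] and η ∈ (0,2), and set λ± = ησ(ησ ± i√(4-(ησ)²))/2. Then the 2×2 eigenvector matrix X = [[1, 1], [λ₊/(ησ), λ₋/(ησ)]] has singular values √(2+ησ) and √(2-ησ), hence its condition number equals √((2+ησ)/(2-ησ)). -/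
open Matrix

/-- For `σ ∈ (0,1]`, `η ∈ (0,2)` and `λ± = ησ(ησ ± i√(4-(ησ)²))/2`, the eigenvector
matrix `X = [[1, 1], [λ₊/(ησ), λ₋/(ησ)]]` has singular values `√(2+ησ)` and `√(2-ησ)`,
hence condition number `√((2+ησ)/(2-ησ))`. -/
theorem stmt8 (σ η : ℝ) (hσ0 : 0 < σ) (hσ1 : σ ≤ 1) (hη0 : 0 < η) (hη2 : η < 2)
    (lamp lamm : ℂ)
    (hp : lamp = ((η * σ : ℝ) : ℂ) * (((η * σ : ℝ) : ℂ)
        + Complex.I * ((Real.sqrt (4 - (η * σ) ^ 2) : ℝ) : ℂ)) / 2)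
    (hm : lamm = ((η * σ : ℝ) : ℂ) * (((η * σ : ℝ) : ℂ)
        - Complex.I * ((Real.sqrt (4 - (η * σ) ^ 2) : ℝ) : ℂ)) / 2)
    (X : Matrix (Fin 2) (Fin 2) ℂ)
    (hX : X = !![1, 1; lamp / ((η * σ : ℝ) : ℂ), lamm / ((η * σ : ℝ) : ℂ)]) :
    ({s : ℝ | 0 ≤ s ∧ (Xᴴ * X - ((s ^ 2 : ℝ) : ℂ) • 1).det = 0}
        = {Real.sqrt (2 + η * σ), Real.sqrt (2 - η * σ)}) ∧
    Real.sqrt (2 + η * σ) / Real.sqrt (2 - η * σ)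
        = Real.sqrt ((2 + η * σ) / (2 - η * σ)) := by
  set a := η * σ with ha
  have ha0 : 0 < a := mul_pos hη0 hσ0
  have ha2 : a < 2 := by nlinarith
  have haC : ((a : ℝ) : ℂ) ≠ 0 := by
    exact_mod_cast (ne_of_gt ha0)
  have hs2 : (Real.sqrt (4 - a ^ 2)) ^ 2 = 4 - a ^ 2 :=
    Real.sq_sqrt (by nlinarith)
  set u : ℂ := Complex.I * ((Real.sqrt (4 - a ^ 2) : ℝ) : ℂ) with hu_def
  have hu : u ^ 2 = (a : ℂ) ^ 2 - 4 := by
    rw [hu_def, mul_pow, Complex.I_sq, ← Complex.ofReal_pow, hs2]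
    push_cast
    ring
  have hz : lamp / ((a : ℝ) : ℂ) = ((a : ℂ) + u) / 2 := by
    rw [hp]; field_simp
  have hw : lamm / ((a : ℝ) : ℂ) = ((a : ℂ) - u) / 2 := by
    rw [hm]; field_simp
  have hstarz : star (((a : ℂ) + u) / 2) = ((a : ℂ) - u) / 2 := by
    rw [hu_def]
    simp [div_eq_mul_inv, star_mul', Complex.conj_I, Complex.conj_ofReal]
    ring
  have hstarw : star (((a : ℂ) - u) / 2) = ((a : ℂ) + u) / 2 := by
    rw [hu_def]
    simp [div_eq_mul_inv, star_mul', Complex.conj_I, Complex.conj_ofReal, sub_eq_add_neg]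
  have hdet : ∀ t : ℂ, (Xᴴ * X - t • 1).det = (2 - t) ^ 2 - (a : ℂ) ^ 2 := by
    intro t
    have hX' : X = !![1, 1; ((a : ℂ) + u) / 2, ((a : ℂ) - u) / 2] := by
      rw [hX, hz, hw]
    have hXH : Xᴴ = !![1, ((a : ℂ) - u) / 2; 1, ((a : ℂ) + u) / 2] := by
      rw [hX']
      ext i j
      fin_cases i <;> fin_cases j <;>
        simp [Matrix.conjTranspose_apply, hstarz, hstarw]
    have h1 : (t • (1 : Matrix (Fin 2) (Fin 2) ℂ)) = !![t, 0; 0, t] := by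
      ext i j; fin_cases i <;> fin_cases j <;> simp
    rw [hXH, hX', h1, Matrix.mul_fin_two]
    simp [Matrix.det_fin_two, Matrix.sub_apply]
    linear_combination (-(1 + ((a:ℂ)^2 - u^2)/4 + 2 - 2*t)/4 - (u^2 - (a:ℂ)^2 + 4)/16) * hu
  constructor
  · ext s
    simp only [Set.mem_setOf_eq, Set.mem_insert_iff, Set.mem_singleton_iff]
    have hcast : ((2 : ℂ) - ((s ^ 2 : ℝ) : ℂ)) ^ 2 - (a : ℂ) ^ 2
        = (((2 - s ^ 2) ^ 2 - a ^ 2 : ℝ) : ℂ) := by push_cast; ring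
    constructor
    · rintro ⟨hs0, hdet0⟩
      rw [hdet, hcast, Complex.ofReal_eq_zero] at hdet0
      have h' : (2 - s ^ 2 - a) * (2 - s ^ 2 + a) = 0 := by linear_combination hdet0
      rcases mul_eq_zero.mp h' with h | h
      · right
        rw [← Real.sqrt_sq hs0, show s ^ 2 = 2 - a by linarith]
      · left
        rw [← Real.sqrt_sq hs0, show s ^ 2 = 2 + a by linarith]
    · rintro (rfl | rfl)
      · refine ⟨Real.sqrt_nonneg _, ?_⟩
        rw [hdet, hcast, Complex.ofReal_eq_zero,
          Real.sq_sqrt (by linarith : (0:ℝ) ≤ 2 + a)]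
        ring
      · refine ⟨Real.sqrt_nonneg _, ?_⟩
        rw [hdet, hcast, Complex.ofReal_eq_zero,
          Real.sq_sqrt (by linarith : (0:ℝ) ≤ 2 - a)]
        ring
  · exact (Real.sqrt_div (by linarith : (0:ℝ) ≤ 2 + a) (2 - a)).symm
end

section
/- Let 0 < a < b and let 𝒫ₚ be the set of real polynomials f of degree at most p with f(0) = 1. Then min over f ∈ 𝒫ₚ of max over λ ∈ [a,b] of |f(λ)| equals 1/Tₚ((b+a)/(b-a)), achieved by f(λ) = Tₚ((b+a-2λ)/(b-a))/Tₚ((b+a)/(b-a)). -/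
open Polynomial Real

section aux
lemma chebT_natDegree_le (n : ℕ) : (Chebyshev.T ℝ (n:ℤ)).natDegree ≤ n := by
  induction n using Nat.strong_induction_on with
  | _ n ih =>
    match n with
    | 0 => simp [Chebyshev.T_zero]
    | 1 => simp [Chebyshev.T_one]
    | (m+2) =>
      have h := Chebyshev.T_add_two ℝ (m:ℤ)
      push_cast
      rw [show ((m:ℤ)+2) = (m:ℤ)+2 by ring, h]
      refine le_trans (natDegree_sub_le _ _) ?_
      have h1 : (2 * X * Chebyshev.T ℝ ((m:ℤ)+1)).natDegree ≤ m + 2 := by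
        refine le_trans (natDegree_mul_le) ?_
        have := ih (m+1) (by omega)
        have hx : (2 * (X:ℝ[X])).natDegree ≤ 1 := by
          refine le_trans natDegree_mul_le ?_
          simp
        push_cast at this ⊢
        omega
      have h2 := ih m (by omega)
      simp only [max_le_iff]
      exact ⟨h1, by omega⟩

lemma chebT_ge_one {x : ℝ} (hx : 1 ≤ x) (n : ℕ) :
    1 ≤ (Chebyshev.T ℝ (n:ℤ)).eval x ∧
      (Chebyshev.T ℝ (n:ℤ)).eval x ≤ (Chebyshev.T ℝ ((n:ℤ)+1)).eval x := by
  induction n with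
  | zero => simp [Chebyshev.T_zero, Chebyshev.T_one, hx]
  | succ m ih =>
    have h := Chebyshev.T_add_two ℝ (m:ℤ)
    have key : (Chebyshev.T ℝ ((m:ℤ)+2)).eval x =
        2 * x * (Chebyshev.T ℝ ((m:ℤ)+1)).eval x - (Chebyshev.T ℝ (m:ℤ)).eval x := by
      rw [h]; simp
    constructor
    · push_cast; linarith [ih.1, ih.2]
    · push_cast
      rw [show ((m:ℤ)+1+1) = (m:ℤ)+2 by ring, key]
      nlinarith [ih.1, ih.2]

lemma chebT_abs_le {y : ℝ} (hy : y ∈ Set.Icc (-1:ℝ) 1) (n : ℤ) :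
    |(Chebyshev.T ℝ n).eval y| ≤ 1 := by
  have : y = Real.cos (Real.arccos y) := (Real.cos_arccos hy.1 hy.2).symm
  rw [this, Chebyshev.T_real_cos]
  exact Real.abs_cos_le_one _

lemma chebT_eval_one (n : ℤ) : (Chebyshev.T ℝ n).eval 1 = 1 := by
  have := Chebyshev.T_real_cos (θ := 0) (n := n)
  simpa using this

lemma real_cos_nat_mul_pi (n : ℕ) : Real.cos (n * π) = (-1)^n := by
  have := Real.cos_nat_mul_pi_sub 0 n
  simpa using this
end aux

/-- Chebyshev minimax: for `0 < a < b`, the minimum over polynomials `f` of degree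
`≤ p` with `f(0) = 1` of `max_{λ ∈ [a,b]} |f(λ)|` equals `1/Tₚ((b+a)/(b-a))`, achieved
by `f(λ) = Tₚ((b+a-2λ)/(b-a)) / Tₚ((b+a)/(b-a))`. -/
theorem stmt14 (a b : ℝ) (ha : 0 < a) (hab : a < b) (p : ℕ) :
    IsLeast {M : ℝ | ∃ f : ℝ[X], f.natDegree ≤ p ∧ f.eval 0 = 1 ∧
        IsGreatest ((fun x => |f.eval x|) '' Set.Icc a b) M}
      (1 / (Polynomial.Chebyshev.T ℝ p).eval ((b + a) / (b - a))) ∧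
    (let g : ℝ[X] := Polynomial.C (1 / (Polynomial.Chebyshev.T ℝ p).eval ((b + a) / (b - a)))
        * (Polynomial.Chebyshev.T ℝ p).comp
            (Polynomial.C ((b + a) / (b - a)) - Polynomial.C (2 / (b - a)) * Polynomial.X);
      g.natDegree ≤ p ∧ g.eval 0 = 1 ∧
      IsGreatest ((fun x => |g.eval x|) '' Set.Icc a b)
        (1 / (Polynomial.Chebyshev.T ℝ p).eval ((b + a) / (b - a)))) := by
  have hba : (0:ℝ) < b - a := sub_pos.mpr hab
  have hc1 : (1:ℝ) ≤ (b + a) / (b - a) := by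
    rw [le_div_iff₀ hba]; linarith
  have hTc1 : 1 ≤ (Chebyshev.T ℝ (p:ℤ)).eval ((b + a) / (b - a)) := (chebT_ge_one hc1 p).1
  have hTcpos : 0 < (Chebyshev.T ℝ (p:ℤ)).eval ((b + a) / (b - a)) := lt_of_lt_of_le one_pos hTc1
  set M : ℝ := 1 / (Chebyshev.T ℝ (p:ℤ)).eval ((b + a) / (b - a)) with hMdef
  have hMpos : 0 < M := by positivity
  have hM1 : M ≤ 1 := by
    rw [hMdef, div_le_one hTcpos]; exact hTc1
  set g : ℝ[X] := C M * (Chebyshev.T ℝ (p:ℤ)).comp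
      (C ((b + a) / (b - a)) - C (2 / (b - a)) * X) with hgdef
  have hgeval : ∀ x : ℝ, g.eval x
      = M * (Chebyshev.T ℝ (p:ℤ)).eval ((b + a) / (b - a) - 2 / (b - a) * x) := by
    intro x
    simp [hgdef, eval_comp]
  have hymem : ∀ x ∈ Set.Icc a b,
      ((b + a) / (b - a) - 2 / (b - a) * x) ∈ Set.Icc (-1:ℝ) 1 := by
    intro x hx
    have h1 : (b + a) / (b - a) - 2 / (b - a) * x = (b + a - 2*x) / (b - a) := by
      field_simp
    rw [h1]
    constructor
    · rw [le_div_iff₀ hba]; have := hx.2; linarith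
    · rw [div_le_one hba]; have := hx.1; linarith
  have hgdeg : g.natDegree ≤ p := by
    refine le_trans (natDegree_mul_le) ?_
    have h1 : (C ((b + a) / (b - a)) - C (2 / (b - a)) * X : ℝ[X]).natDegree ≤ 1 := by
      compute_degree
    have h2 := natDegree_comp_le (p := Chebyshev.T ℝ (p:ℤ))
      (q := C ((b + a) / (b - a)) - C (2 / (b - a)) * X)
    have h3 := chebT_natDegree_le p
    simp only [natDegree_C, zero_add]
    calc ((Chebyshev.T ℝ (p:ℤ)).comp _).natDegree
        ≤ (Chebyshev.T ℝ (p:ℤ)).natDegree * (C ((b + a) / (b - a)) - C (2 / (b - a)) * X : ℝ[X]).natDegree := h2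
      _ ≤ p * 1 := Nat.mul_le_mul h3 h1
      _ = p := by ring
  have hg0 : g.eval 0 = 1 := by
    rw [hgeval 0]
    simp only [mul_zero, sub_zero]
    rw [hMdef]
    field_simp
  have hga : g.eval a = M := by
    rw [hgeval a]
    have : (b + a) / (b - a) - 2 / (b - a) * a = 1 := by field_simp; ring
    rw [this, chebT_eval_one, mul_one]
  have hggr : IsGreatest ((fun x => |g.eval x|) '' Set.Icc a b) M := by
    constructor
    · exact ⟨a, ⟨le_refl a, le_of_lt hab⟩, by simp [hga, abs_of_pos hMpos]⟩
    · rintro v ⟨x, hx, rfl⟩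
      show |g.eval x| ≤ M
      rw [hgeval x, abs_mul, abs_of_pos hMpos]
      have := chebT_abs_le (hymem x hx) (p:ℤ)
      nlinarith
  refine ⟨⟨⟨g, hgdeg, hg0, hggr⟩, ?_⟩, hgdeg, hg0, hggr⟩
  rintro M' ⟨f, hfdeg, hf0, hfgr⟩
  by_contra hlt
  push_neg at hlt
  have habs : ∀ x ∈ Set.Icc a b, |f.eval x| ≤ M' := fun x hx => hfgr.2 ⟨x, hx, rfl⟩
  have hhdeg : (g - f).natDegree ≤ p :=
    le_trans (natDegree_sub_le _ _) (max_le hgdeg hfdeg)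
  have hh0 : (g - f).eval 0 = 0 := by simp [hg0, hf0]
  have hfeqg : f = g := by
    by_cases hp : p = 0
    · have hz : g - f = 0 := by
        refine eq_zero_of_natDegree_lt_card_of_eval_eq_zero' (g - f) {0} ?_ ?_
        · intro i hi
          simp only [Finset.mem_singleton] at hi
          rw [hi]; exact hh0
        · simp [hp] at hhdeg ⊢; omega
      exact (sub_eq_zero.mp hz).symm
    · have hp0 : 0 < p := Nat.pos_of_ne_zero hp
      have hppos : (0:ℝ) < p := by exact_mod_cast hp0
      have hpne : (p:ℝ) ≠ 0 := ne_of_gt hppos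
      set xp : ℕ → ℝ := fun k => ((b + a) - (b - a) * Real.cos (k * π / p)) / 2 with hxp
      have hang : ∀ k, k ≤ p → (k:ℝ) * π / p ∈ Set.Icc 0 π := by
        intro k hk
        have hkr : (k:ℝ) ≤ p := by exact_mod_cast hk
        constructor
        · positivity
        · rw [div_le_iff₀ hppos]; nlinarith [Real.pi_pos]
      have hxmem : ∀ k, k ≤ p → xp k ∈ Set.Icc a b := by
        intro k hk
        have h1 := Real.neg_one_le_cos ((k:ℝ) * π / p)
        have h2 := Real.cos_le_one ((k:ℝ) * π / p)
        constructor
        · show a ≤ ((b + a) - (b - a) * Real.cos (k * π / p)) / 2; nlinarith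
        · show ((b + a) - (b - a) * Real.cos (k * π / p)) / 2 ≤ b; nlinarith
      have hxlt : ∀ j k, j < k → k ≤ p → xp j < xp k := by
        intro j k hjk hkp
        have hj := hang j (le_trans (le_of_lt hjk) hkp)
        have hk := hang k hkp
        have hjr : (j:ℝ) < k := by exact_mod_cast hjk
        have hlt : (j:ℝ) * π / p < (k:ℝ) * π / p := by
          rw [div_lt_div_iff₀ hppos hppos]
          have h1 := mul_lt_mul_of_pos_right (mul_lt_mul_of_pos_right hjr Real.pi_pos) hppos
          linarith
        have hcos := Real.strictAntiOn_cos hj hk hlt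
        show ((b + a) - (b - a) * Real.cos (j * π / p)) / 2
            < ((b + a) - (b - a) * Real.cos (k * π / p)) / 2
        nlinarith
      have hxle : ∀ j k, j ≤ k → k ≤ p → xp j ≤ xp k := by
        intro j k hjk hkp
        rcases eq_or_lt_of_le hjk with rfl | h
        · exact le_refl _
        · exact le_of_lt (hxlt j k h hkp)
      have hgx : ∀ k, k ≤ p → g.eval (xp k) = M * (-1)^k := by
        intro k hk
        have hy : (b + a) / (b - a) - 2 / (b - a) * xp k = Real.cos ((k:ℝ) * π / p) := by
          show (b + a) / (b - a) - 2 / (b - a) * (((b + a) - (b - a) * Real.cos (k * π / p)) / 2)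
              = Real.cos ((k:ℝ) * π / p)
          field_simp
          ring
        rw [hgeval, hy, Chebyshev.T_real_cos]
        congr 1
        rw [show ((p:ℤ):ℝ) * ((k:ℝ) * π / p) = (k:ℝ) * π by push_cast; field_simp]
        exact real_cos_nat_mul_pi k
      have hcont : ContinuousOn (fun x => (g - f).eval x) Set.univ :=
        (Polynomial.continuous (g - f)).continuousOn
      have hz : ∀ k : Fin p, ∃ w ∈ Set.Ioo (xp (k:ℕ)) (xp ((k:ℕ)+1)), (g - f).eval w = 0 := by
        rintro ⟨k, hk⟩
        simp only
        have hk1 : k + 1 ≤ p := hk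
        have hkp : k ≤ p := le_of_lt hk
        have hle : xp k ≤ xp (k+1) := le_of_lt (hxlt k (k+1) (by omega) hk1)
        have hcont' : ContinuousOn (fun x => (g - f).eval x) (Set.Icc (xp k) (xp (k+1))) :=
          (Polynomial.continuous (g - f)).continuousOn
        have hfk := abs_le.mp (habs (xp k) (hxmem k hkp))
        have hfk1 := abs_le.mp (habs (xp (k+1)) (hxmem (k+1) hk1))
        have hgk := hgx k hkp
        have hgk1 := hgx (k+1) hk1
        rcases Nat.even_or_odd k with he | ho
        · have h1 : 0 < (g - f).eval (xp k) := by
            rw [eval_sub, hgk, show ((-1:ℝ))^k = 1 from he.neg_one_pow]; linarith [hfk.2]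
          have h2 : (g - f).eval (xp (k+1)) < 0 := by
            rw [eval_sub, hgk1, show ((-1:ℝ))^(k+1) = -1 from (Even.add_one he).neg_one_pow]; linarith [hfk1.1]
          obtain ⟨w, hw1, hw2⟩ := intermediate_value_Ioo' hle hcont'
            (Set.mem_Ioo.mpr ⟨h2, h1⟩)
          exact ⟨w, hw1, hw2⟩
        · have h1 : (g - f).eval (xp k) < 0 := by
            rw [eval_sub, hgk, show ((-1:ℝ))^k = -1 from ho.neg_one_pow]; linarith [hfk.1]
          have h2 : 0 < (g - f).eval (xp (k+1)) := by
            rw [eval_sub, hgk1, show ((-1:ℝ))^(k+1) = 1 from (Odd.add_one ho).neg_one_pow]; linarith [hfk1.2]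
          obtain ⟨w, hw1, hw2⟩ := intermediate_value_Ioo hle hcont'
            (Set.mem_Ioo.mpr ⟨h1, h2⟩)
          exact ⟨w, hw1, hw2⟩
      choose z hz1 hz2 using hz
      have hzlt : ∀ k l : Fin p, (k:ℕ) < (l:ℕ) → z k < z l := by
        intro k l hkl
        have h1 : z k < xp ((k:ℕ)+1) := (hz1 k).2
        have h2 : xp (l:ℕ) < z l := (hz1 l).1
        have h3 : xp ((k:ℕ)+1) ≤ xp (l:ℕ) := hxle _ _ (by omega) (le_of_lt l.2)
        linarith
      have hzpos : ∀ k : Fin p, 0 < z k := by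
        intro k
        have h1 := (hz1 k).1
        have h2 := (hxmem (k:ℕ) (le_of_lt k.2)).1
        linarith
      set r : Fin (p+1) → ℝ := fun i => if h : (i:ℕ) = 0 then 0 else z ⟨(i:ℕ)-1, by omega⟩
        with hr
      have hrinj : Function.Injective r := by
        intro i j hij
        by_cases hi : (i:ℕ) = 0 <;> by_cases hj : (j:ℕ) = 0
        · exact Fin.ext (by omega)
        · exfalso
          rw [hr] at hij
          simp only [hi, hj, dif_pos, dif_neg, not_false_iff] at hij
          exact (hzpos _).ne hij
        · exfalso
          rw [hr] at hij
          simp only [hi, hj, dif_pos, dif_neg, not_false_iff] at hij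
          exact (hzpos _).ne' hij
        · rw [hr] at hij
          simp only [hi, hj, dif_neg, not_false_iff] at hij
          by_contra hne
          have hne' : (i:ℕ) ≠ (j:ℕ) := fun h => hne (Fin.ext h)
          rcases Nat.lt_or_ge (i:ℕ) (j:ℕ) with h | h
          · exact absurd hij (ne_of_lt (hzlt _ _ (by simp only [Fin.val_mk]; omega)))
          · exact absurd hij (ne_of_gt (hzlt _ _ (by simp only [Fin.val_mk]; omega)))
      have heval : ∀ i, (g - f).eval (r i) = 0 := by
        intro i
        by_cases hi : (i:ℕ) = 0
        · rw [hr]; simp only [hi, dif_pos]; exact hh0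
        · rw [hr]; simp only [hi, dif_neg, not_false_iff]; exact hz2 _
      have hzero := eq_zero_of_natDegree_lt_card_of_eval_eq_zero (g - f) hrinj heval
        (by simpa using Nat.lt_succ_of_le hhdeg)
      exact (sub_eq_zero.mp hzero).symm
  rw [hfeqg] at hfgr
  exact absurd (IsGreatest.unique hfgr hggr) (ne_of_lt hlt)
end
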